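/- arXiv:2309.04593 — 3 statements merged into one kernel-verified Lean document; each statement's English description precedes it below -/
import Mathlib

section
/- Let T : ℝ^N → ℝ^M be a linear map, and for each index r in a finite index set R let H_r : ℝ^N → Matrix (Fin 2) (Fin 2) ℝ be a linear map; write H(u) for the family (H_r u)_{r∈R} and suppose ker T ∩ (⋂_r ker H_r) = {0}. Let g : [0,∞) → [0,∞) be continuous with g(0) = 0, coercive (g(x) → ∞ as x → ∞), differentiable on (0,∞) with derivative g' positive and nonincreasing on (0,∞). Then for any m ∈ ℝ^M and any ρ > 0, the function f(u) = (1/2)‖T u − m‖² + ρ · Σ_{r∈R} [ g(σ₁(H_r u)) + g(σ₂(H_r u)) ] is coercive, i.e. f(u) → ∞ as ‖u‖ → ∞. -/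
/-!
The linear map `u ↦ (T u, (H r u)_r)` is injective, hence antilipschitz, so it maps the cobounded
filter of `ℝ^N` into that of the product space, which is the coproduct of the cobounded filters of
the factors. The cost is a sum of nonnegative terms and each factor has a term that grows along it:
the fidelity term along `T u`, and along `H r u` the penalty `g (σ₁ (H r u))`, because
`∑ A i j ^ 2 = tr (Aᵀ A) ≤ 2 σ₁(A) ^ 2` bounds every entry of `A` by `√2 σ₁(A)`.
-/

open Filter

/-- Singular values of a real `n × n` matrix, in decreasing order:
the square roots of the eigenvalues of `Aᵀ * A`, sorted decreasingly
(so `singularValues A 0` is the largest). -/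
noncomputable def singularValues {n : ℕ} (A : Matrix (Fin n) (Fin n) ℝ) : Fin n → ℝ :=
  fun i => Real.sqrt ((Matrix.isHermitian_conjTranspose_mul_self A).eigenvalues
      (Tuple.sort (Matrix.isHermitian_conjTranspose_mul_self A).eigenvalues i.rev))

open Bornology

attribute [local instance] Matrix.normedAddCommGroup Matrix.normedSpace

section CoprodAtTop

variable {α β ι γ : Type*} [AddCommMonoid γ] [PartialOrder γ] [IsOrderedAddMonoid γ]

lemma tendsto_fst_add_snd_coprod_atTop {la : Filter α} {lb : Filter β} {F : α → γ} {G : β → γ}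
    (hF : Tendsto F la atTop) (hG : Tendsto G lb atTop) (hF₀ : ∀ a, 0 ≤ F a) (hG₀ : ∀ b, 0 ≤ G b) :
    Tendsto (fun p : α × β => F p.1 + G p.2) (la.coprod lb) atTop := by
  refine tendsto_sup.2 ⟨?_, ?_⟩
  · exact tendsto_atTop_mono (fun p => le_add_of_nonneg_right (hG₀ p.2))
      (hF.comp tendsto_comap)
  · exact tendsto_atTop_mono (fun p => le_add_of_nonneg_left (hF₀ p.1))
      (hG.comp tendsto_comap)

lemma tendsto_sum_coprodᵢ_atTop [Fintype ι] {l : Filter α} {F : α → γ}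
    (hF : Tendsto F l atTop) (hF₀ : ∀ a, 0 ≤ F a) :
    Tendsto (fun x : ι → α => ∑ i, F (x i)) (Filter.coprodᵢ fun _ => l) atTop := by
  refine tendsto_iSup.2 fun i => tendsto_atTop_mono (fun x => ?_) (hF.comp tendsto_comap)
  exact Finset.single_le_sum (fun j _ => hF₀ (x j)) (Finset.mem_univ i)

end CoprodAtTop

lemma tendsto_half_norm_sub_sq_cobounded {E : Type*} [SeminormedAddCommGroup E] (m : E) :
    Tendsto (fun v : E => (1 / 2 : ℝ) * ‖v - m‖ ^ 2) (cobounded E) atTop := by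
  have := (tendsto_pow_atTop two_ne_zero).comp
    (tendsto_norm_cobounded_atTop.comp (tendsto_sub_const_cobounded m))
  exact this.const_mul_atTop (by norm_num)

section SingularValues

open scoped Matrix

variable {n : ℕ}

lemma singularValues_nonneg (A : Matrix (Fin n) (Fin n) ℝ) (i : Fin n) : 0 ≤ singularValues A i :=
  Real.sqrt_nonneg _

lemma eigenvalues_le_sq_singularValues_zero (A : Matrix (Fin (n + 1)) (Fin (n + 1)) ℝ)
    (k : Fin (n + 1)) :
    (Matrix.isHermitian_conjTranspose_mul_self A).eigenvalues k ≤ singularValues A 0 ^ 2 := by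
  set μ := (Matrix.isHermitian_conjTranspose_mul_self A).eigenvalues
  have hsort : μ k = μ (Tuple.sort μ ((Tuple.sort μ).symm k)) := by simp
  rw [singularValues, Real.sq_sqrt (Matrix.eigenvalues_conjTranspose_mul_self_nonneg A _), hsort]
  exact Tuple.monotone_sort μ (Fin.le_last _)

lemma sq_le_trace_conjTranspose_mul_self {m p : Type*} [Fintype m] [Fintype p]
    (A : Matrix m p ℝ) (i : m) (j : p) : A i j ^ 2 ≤ (Aᴴ * A).trace := by
  have htrace : (Aᴴ * A).trace = ∑ q, ∑ k, A k q ^ 2 := by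
    simp [Matrix.trace, Matrix.mul_apply, sq]
  rw [htrace]
  calc A i j ^ 2 ≤ ∑ k, A k j ^ 2 :=
        Finset.single_le_sum (fun k _ => sq_nonneg (A k j)) (Finset.mem_univ i)
    _ ≤ ∑ q, ∑ k, A k q ^ 2 :=
        Finset.single_le_sum (f := fun q => ∑ k, A k q ^ 2)
          (fun q _ => Finset.sum_nonneg fun k _ => sq_nonneg _) (Finset.mem_univ j)

lemma sq_le_mul_sq_singularValues_zero (A : Matrix (Fin (n + 1)) (Fin (n + 1)) ℝ)
    (i j : Fin (n + 1)) : A i j ^ 2 ≤ (n + 1) * singularValues A 0 ^ 2 := by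
  have hA := Matrix.isHermitian_conjTranspose_mul_self A
  calc A i j ^ 2 ≤ (Aᴴ * A).trace := sq_le_trace_conjTranspose_mul_self A i j
    _ = ∑ k, hA.eigenvalues k := by simpa using hA.trace_eq_sum_eigenvalues
    _ ≤ ∑ _k : Fin (n + 1), singularValues A 0 ^ 2 :=
        Finset.sum_le_sum fun k _ => eigenvalues_le_sq_singularValues_zero A k
    _ = (n + 1) * singularValues A 0 ^ 2 := by simp

lemma norm_le_sqrt_mul_singularValues_zero (A : Matrix (Fin (n + 1)) (Fin (n + 1)) ℝ) :
    ‖A‖ ≤ √(n + 1) * singularValues A 0 := by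
  have hbound : 0 ≤ √(n + 1) * singularValues A 0 :=
    mul_nonneg (Real.sqrt_nonneg _) (singularValues_nonneg A 0)
  refine (Matrix.norm_le_iff hbound).2 fun i j => ?_
  refine Real.norm_eq_abs (A i j) ▸ abs_le_of_sq_le_sq ?_ hbound
  rw [mul_pow, Real.sq_sqrt (by positivity)]
  exact sq_le_mul_sq_singularValues_zero A i j

lemma tendsto_singularValues_zero_cobounded :
    Tendsto (fun A : Matrix (Fin (n + 1)) (Fin (n + 1)) ℝ => singularValues A 0)
      (cobounded _) atTop := by
  have hsqrt : 0 < √((n : ℝ) + 1) := Real.sqrt_pos.2 (by positivity)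
  refine tendsto_atTop_mono (fun A => ?_) (tendsto_norm_cobounded_atTop.atTop_div_const hsqrt)
  rw [div_le_iff₀' hsqrt]
  exact norm_le_sqrt_mul_singularValues_zero A

lemma tendsto_sum_comp_singularValues_cobounded {g : ℝ → ℝ}
    (hg₀ : ∀ x ∈ Set.Ici (0 : ℝ), 0 ≤ g x) (hg : Tendsto g atTop atTop) :
    Tendsto (fun A : Matrix (Fin (n + 1)) (Fin (n + 1)) ℝ => ∑ k, g (singularValues A k))
      (cobounded _) atTop := by
  refine tendsto_atTop_mono (fun A => ?_) (hg.comp tendsto_singularValues_zero_cobounded)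
  exact Finset.single_le_sum (fun k _ => hg₀ _ (singularValues_nonneg A k)) (Finset.mem_univ 0)

end SingularValues

theorem restoration_cost_coercive_general
    {N M : ℕ} {R : Type*} [Fintype R]
    (T : EuclideanSpace ℝ (Fin N) →ₗ[ℝ] EuclideanSpace ℝ (Fin M))
    (H : R → (EuclideanSpace ℝ (Fin N) →ₗ[ℝ] Matrix (Fin 2) (Fin 2) ℝ))
    (hker : LinearMap.ker T ⊓ (⨅ r : R, LinearMap.ker (H r)) = ⊥)
    (g : ℝ → ℝ)
    (hgnonneg : ∀ x ∈ Set.Ici (0 : ℝ), 0 ≤ g x)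
    (hgcoercive : Tendsto g atTop atTop)
    (m : EuclideanSpace ℝ (Fin M)) (ρ : ℝ) (hρ : 0 < ρ) :
    Tendsto
      (fun u : EuclideanSpace ℝ (Fin N) =>
        (1 / 2) * ‖T u - m‖ ^ 2 +
          ρ * ∑ r : R, (g (singularValues (H r u) 0) + g (singularValues (H r u) 1)))
      (comap (fun u : EuclideanSpace ℝ (Fin N) => ‖u‖) atTop) atTop := by
  obtain ⟨K, -, hL⟩ := (T.prod (LinearMap.pi H)).exists_antilipschitzWith
    (by rw [LinearMap.ker_prod, LinearMap.ker_pi, hker])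
  have hpenalty := tendsto_sum_comp_singularValues_cobounded (n := 1) hgnonneg hgcoercive
  have hpenalty₀ : ∀ A : Matrix (Fin 2) (Fin 2) ℝ, 0 ≤ ∑ k, g (singularValues A k) :=
    fun A => Finset.sum_nonneg fun k _ => hgnonneg _ (singularValues_nonneg A k)
  have hreg : Tendsto (fun As : R → Matrix (Fin 2) (Fin 2) ℝ =>
      ρ * ∑ r, ∑ k, g (singularValues (As r) k)) (cobounded _) atTop := by
    rw [cobounded_pi]
    exact (tendsto_sum_coprodᵢ_atTop hpenalty hpenalty₀).const_mul_atTop hρ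
  have hcost := tendsto_fst_add_snd_coprod_atTop (tendsto_half_norm_sub_sq_cobounded m) hreg
    (fun v => by positivity) fun As =>
      mul_nonneg hρ.le (Finset.sum_nonneg fun r _ => hpenalty₀ (As r))
  rw [← cobounded_prod] at hcost
  rw [comap_norm_atTop]
  convert hcost.comp hL.tendsto_cobounded using 1
  ext u
  simp [Fin.sum_univ_two]

/-- coercivity of the QSHS-regularized restoration cost
`f(u) = ½‖Tu − m‖² + ρ Σ_r [g(σ₁(H_r u)) + g(σ₂(H_r u))]`
when `ker T ∩ (⋂ r, ker H_r) = {0}` and `g` is a continuous, coercive penalty on `[0,∞)`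
vanishing at `0`, differentiable on `(0,∞)` with positive nonincreasing derivative. -/
theorem restoration_cost_coercive
    {N M : ℕ} {R : Type*} [Fintype R]
    (T : EuclideanSpace ℝ (Fin N) →ₗ[ℝ] EuclideanSpace ℝ (Fin M))
    (H : R → (EuclideanSpace ℝ (Fin N) →ₗ[ℝ] Matrix (Fin 2) (Fin 2) ℝ))
    (hker : LinearMap.ker T ⊓ (⨅ r : R, LinearMap.ker (H r)) = ⊥)
    (g g' : ℝ → ℝ)
    (hg0 : g 0 = 0)
    (hgcont : ContinuousOn g (Set.Ici 0))
    (hgnonneg : ∀ x ∈ Set.Ici (0 : ℝ), 0 ≤ g x)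
    (hgcoercive : Tendsto g atTop atTop)
    (hgderiv : ∀ x ∈ Set.Ioi (0 : ℝ), HasDerivAt g (g' x) x)
    (hg'pos : ∀ x ∈ Set.Ioi (0 : ℝ), 0 < g' x)
    (hg'anti : AntitoneOn g' (Set.Ioi 0))
    (m : EuclideanSpace ℝ (Fin M)) (ρ : ℝ) (hρ : 0 < ρ) :
    Tendsto
      (fun u : EuclideanSpace ℝ (Fin N) =>
        (1 / 2) * ‖T u - m‖ ^ 2 +
          ρ * ∑ r : R, (g (singularValues (H r u) 0) + g (singularValues (H r u) 1)))
      (comap (fun u : EuclideanSpace ℝ (Fin N) => ‖u‖) atTop) atTop :=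
  restoration_cost_coercive_general T H hker g hgnonneg hgcoercive m ρ hρ
end

section
/- Fix q ∈ (0,1) and ρ > 0, and define s : [0,∞) → ℝ by s(0) = 0 and s(x) = max{ x − ρ^{2−q} x^{1−q}, 0 } for x > 0, and set λ := ρ^{(2−q)/q}. Then: (i) s is continuous on [0,∞); (ii) s(x) = 0 for all x ∈ [0, λ]; (iii) s is strictly increasing on [λ, ∞); and (iv) s(x) ≤ x for all x ≥ 0. -/
/-!
With `C = ρ^{2-q} = λ^q`, for `x ≥ 0` we have `x - C x^{1-q} = x^{1-q} (x^q - C)`, so the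
expression inside the `max` is `≤ 0` on `[0, λ]` and `≥ 0` beyond. On `[λ, ∞)` the shrinkage is
thus the product of the strictly increasing positive `x^{1-q}` and the nondecreasing nonnegative
`x^q - C`, hence strictly increasing.
-/

open Set Real

noncomputable def qShrinkage (C q x : ℝ) : ℝ := max (x - C * x ^ (1 - q)) 0

namespace qShrinkage

variable {C q lam x : ℝ}

lemma sub_mul_rpow_eq (C q : ℝ) (hx : 0 ≤ x) :
    x - C * x ^ (1 - q) = x ^ (1 - q) * (x ^ q - C) := by
  have hsplit : x ^ (1 - q) * x ^ q = x := by
    rw [← rpow_add' hx (by norm_num), sub_add_cancel, rpow_one]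
  linear_combination -hsplit

lemma zero (hq : q < 1) : qShrinkage C q 0 = 0 := by
  simp [qShrinkage, zero_rpow (sub_ne_zero.mpr hq.ne')]

lemma continuous (hq : q < 1) : Continuous (qShrinkage C q) :=
  (continuous_id.sub (continuous_const.mul
    (continuous_id.rpow_const fun _ => Or.inr (sub_nonneg.mpr hq.le)))).max continuous_const

lemma le_self (hC : 0 ≤ C) (hx : 0 ≤ x) : qShrinkage C q x ≤ x :=
  max_le (sub_le_self _ (mul_nonneg hC (rpow_nonneg hx _))) hx

lemma eq_zero_of_mem_Icc (hq : 0 ≤ q) (hlam : lam ^ q = C) (hx : x ∈ Icc 0 lam) :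
    qShrinkage C q x = 0 := by
  refine max_eq_right ?_
  rw [sub_mul_rpow_eq C q hx.1, ← hlam]
  exact mul_nonpos_of_nonneg_of_nonpos (rpow_nonneg hx.1 _)
    (sub_nonpos.mpr (rpow_le_rpow hx.1 hx.2 hq))

lemma eq_of_le (hq : 0 ≤ q) (hlam0 : 0 ≤ lam) (hlam : lam ^ q = C) (hx : lam ≤ x) :
    qShrinkage C q x = x ^ (1 - q) * (x ^ q - C) := by
  have hx0 : 0 ≤ x := hlam0.trans hx
  subst hlam
  rw [qShrinkage, sub_mul_rpow_eq _ q hx0, max_eq_left]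
  exact mul_nonneg (rpow_nonneg hx0 _) (sub_nonneg.mpr (rpow_le_rpow hlam0 hx hq))

lemma strictMonoOn_Ici (hq0 : 0 < q) (hq1 : q < 1) (hlam0 : 0 ≤ lam) (hlam : lam ^ q = C) :
    StrictMonoOn (qShrinkage C q) (Ici lam) := by
  intro x hx y hy hxy
  have hx0 : 0 ≤ x := hlam0.trans hx
  have hy_pos : 0 < y ^ q - C := by
    rw [← hlam]
    exact sub_pos.mpr (rpow_lt_rpow hlam0 (lt_of_le_of_lt hx hxy) hq0)
  rw [eq_of_le hq0.le hlam0 hlam hx, eq_of_le hq0.le hlam0 hlam hy]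
  calc x ^ (1 - q) * (x ^ q - C)
      ≤ x ^ (1 - q) * (y ^ q - C) := by gcongr
    _ < y ^ (1 - q) * (y ^ q - C) := by gcongr

end qShrinkage

/-- the `q`-shrinkage operation `s(x) = max{x − ρ^{2−q} x^{1−q}, 0}` (for `x > 0`,
with `s(0) = 0`) satisfies the threshold conditions with `λ = ρ^{(2−q)/q}`:
it is continuous on `[0,∞)`, vanishes on `[0,λ]`, is strictly increasing on `[λ,∞)`,
and is dominated by the identity. -/
theorem q_shrinkage_threshold_properties
    (q ρ : ℝ) (hq : q ∈ Set.Ioo (0 : ℝ) 1) (hρ : 0 < ρ)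
    (s : ℝ → ℝ) (hs0 : s 0 = 0)
    (hs : ∀ x : ℝ, 0 < x → s x = max (x - ρ ^ (2 - q) * x ^ (1 - q)) 0)
    (lam : ℝ) (hlam : lam = ρ ^ ((2 - q) / q)) :
    ContinuousOn s (Set.Ici 0) ∧
    (∀ x ∈ Set.Icc (0 : ℝ) lam, s x = 0) ∧
    StrictMonoOn s (Set.Ici lam) ∧
    (∀ x : ℝ, 0 ≤ x → s x ≤ x) := by
  obtain ⟨hq0, hq1⟩ := hq
  set C := ρ ^ (2 - q)
  have hC : 0 ≤ C := rpow_nonneg hρ.le _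
  have hlam0 : 0 ≤ lam := hlam ▸ rpow_nonneg hρ.le _
  have hlamq : lam ^ q = C := by
    rw [hlam, ← rpow_mul hρ.le, div_mul_cancel₀ _ hq0.ne']
  have hs_eq : EqOn s (qShrinkage C q) (Ici 0) := by
    rintro x (hx : 0 ≤ x)
    rcases hx.eq_or_lt with rfl | hx
    · rw [hs0, qShrinkage.zero hq1]
    · exact hs x hx
  refine ⟨(qShrinkage.continuous hq1).continuousOn.congr hs_eq, fun x hx => ?_,
    (qShrinkage.strictMonoOn_Ici hq0 hq1 hlam0 hlamq).congr fun x hx => ?_, fun x hx => ?_⟩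
  · rw [hs_eq hx.1, qShrinkage.eq_zero_of_mem_Icc hq0.le hlamq hx]
  · exact (hs_eq (hlam0.trans hx)).symm
  · rw [hs_eq hx]
    exact qShrinkage.le_self hC hx
end

section
/- Fix q ∈ (0,1) and ρ > 0, and define S : ℝ → ℝ by S(x) = max{|x| − ρ^{2−q}|x|^{1−q}, 0}·sign(x) for x ≠ 0 and S(0) = 0. Let g : ℝ → ℝ be any even continuous function such that for every x ∈ ℝ, S(x) is a global minimizer over t ∈ ℝ of t ↦ ρ·g(t) + (1/2)(t − x)². Then g is coercive: g(t) → ∞ as |t| → ∞. -/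
/-! For `t` beyond the dead-zone threshold `τ = ρ^((2-q)/q)` the shrinkage moves `t` by at least
`τ`, i.e. `t - S t ≥ τ`, while `S t` stays nonnegative. Comparing the proximal objective at `S t`
with its value at `t` itself gives the descent `g (S t) + (t - S t)² / (2ρ) ≤ g t`, so each step
towards the origin raises `g` by at least `τ / (2ρ)` times the step length. Starting from the
minimum of `g` on `[0, τ]` and iterating, `g` grows at least linearly, and evenness handles
negative arguments. -/

open Filter Set

noncomputable section

def qShrink (q ρ x : ℝ) : ℝ :=
  max (|x| - ρ ^ (2 - q) * |x| ^ (1 - q)) 0 * Real.sign x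

/-- `qShrink q ρ` vanishes exactly on `[-τ, τ]` for this `τ`. -/
def qShrinkThreshold (q ρ : ℝ) : ℝ :=
  ρ ^ ((2 - q) / q)

end

section Shrinkage

variable {q ρ t : ℝ}

theorem qShrinkThreshold_pos (hρ : 0 < ρ) : 0 < qShrinkThreshold q ρ :=
  Real.rpow_pos_of_pos hρ _

theorem qShrink_of_pos (ht : 0 < t) :
    qShrink q ρ t = max (t - ρ ^ (2 - q) * t ^ (1 - q)) 0 := by
  rw [qShrink, abs_of_pos ht, Real.sign_of_pos ht, mul_one]

theorem qShrink_nonneg_of_pos (ht : 0 < t) : 0 ≤ qShrink q ρ t :=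
  (qShrink_of_pos ht).symm ▸ le_max_right _ _

theorem qShrinkThreshold_le_rpow_mul_rpow (hq0 : 0 < q) (hq1 : q ≤ 1) (hρ : 0 < ρ)
    (ht : qShrinkThreshold q ρ ≤ t) :
    qShrinkThreshold q ρ ≤ ρ ^ (2 - q) * t ^ (1 - q) := by
  have hτ := qShrinkThreshold_pos (q := q) hρ
  have hfixed : ρ ^ (2 - q) * qShrinkThreshold q ρ ^ (1 - q) = qShrinkThreshold q ρ := by
    rw [qShrinkThreshold, ← Real.rpow_mul hρ.le, ← Real.rpow_add hρ]
    congr 1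
    field_simp
    ring
  calc qShrinkThreshold q ρ = ρ ^ (2 - q) * qShrinkThreshold q ρ ^ (1 - q) := hfixed.symm
    _ ≤ ρ ^ (2 - q) * t ^ (1 - q) := by gcongr

theorem qShrink_le_sub_threshold (hq0 : 0 < q) (hq1 : q ≤ 1) (hρ : 0 < ρ)
    (ht : qShrinkThreshold q ρ ≤ t) :
    qShrink q ρ t ≤ t - qShrinkThreshold q ρ := by
  have hgap := qShrinkThreshold_le_rpow_mul_rpow hq0 hq1 hρ ht
  rw [qShrink_of_pos ((qShrinkThreshold_pos hρ).trans_le ht)]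
  exact max_le (by linarith) (by linarith [qShrinkThreshold_pos (q := q) hρ])

end Shrinkage

theorem descent_of_prox_at_self {ρ s x : ℝ} {g : ℝ → ℝ} (hρ : 0 < ρ)
    (h : ρ * g s + 1 / 2 * (s - x) ^ 2 ≤ ρ * g x + 1 / 2 * (x - x) ^ 2) :
    g s + 1 / (2 * ρ) * (x - s) ^ 2 ≤ g x := by
  have h' : ρ * (g s + 1 / (2 * ρ) * (x - s) ^ 2) ≤ ρ * g x := by
    field_simp
    nlinarith
  exact le_of_mul_le_mul_left h' hρ

theorem le_of_descent {g T : ℝ → ℝ} {τ c m : ℝ} (hτ : 0 < τ) (hc : 0 ≤ c)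
    (hm : ∀ t ∈ Icc 0 τ, m ≤ g t)
    (hT_nonneg : ∀ t, τ < t → 0 ≤ T t) (hT_le : ∀ t, τ < t → T t ≤ t - τ)
    (hdesc : ∀ t, τ < t → g (T t) + c * (t - T t) ^ 2 ≤ g t)
    {t : ℝ} (ht : 0 ≤ t) :
    m + c * τ * (t - τ) ≤ g t := by
  suffices h : ∀ n : ℕ, ∀ t ∈ Icc 0 ((n + 1) * τ), m + c * τ * (t - τ) ≤ g t by
    obtain ⟨n, hn⟩ := exists_nat_ge (t / τ)
    refine h n t ⟨ht, ?_⟩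
    rw [div_le_iff₀ hτ] at hn
    linarith
  intro n
  induction n with
  | zero =>
    intro t ht
    rw [Nat.cast_zero, zero_add, one_mul] at ht
    have : c * τ * (t - τ) ≤ 0 := mul_nonpos_of_nonneg_of_nonpos (by positivity) (by linarith [ht.2])
    linarith [hm t ht]
  | succ n ih =>
    rintro t ⟨ht0, htn⟩
    rcases le_or_gt t τ with hle | hlt
    · have : c * τ * (t - τ) ≤ 0 := mul_nonpos_of_nonneg_of_nonpos (by positivity) (by linarith)
      linarith [hm t ⟨ht0, hle⟩]
    · have hstep := hT_le t hlt
      have hprev := ih (T t) ⟨hT_nonneg t hlt, by push_cast at htn ⊢; linarith⟩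
      have hcost : c * τ * (t - T t) ≤ c * (t - T t) ^ 2 := by
        rw [mul_assoc, sq]
        gcongr <;> linarith
      linarith [hdesc t hlt]

theorem Function.Even.tendsto_cocompact_atTop {g f : ℝ → ℝ} (hg : Function.Even g)
    (hf : Tendsto f atTop atTop) (hfg : ∀ t, 0 ≤ t → f t ≤ g t) :
    Tendsto g (cocompact ℝ) atTop := by
  have habs : Tendsto (fun t : ℝ => |t|) (cocompact ℝ) atTop := tendsto_norm_cocompact_atTop
  have hg_abs : ∀ t, g |t| = g t := fun t => by
    rcases abs_choice t with h | h <;> simp only [h, hg t]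
  refine tendsto_atTop_mono (fun t => ?_) (hf.comp habs)
  simpa only [Function.comp, hg_abs] using hfg |t| (abs_nonneg t)

theorem q_shrinkage_penalty_coercive_general
    (q ρ : ℝ) (hq : q ∈ Set.Ioo (0 : ℝ) 1) (hρ : 0 < ρ)
    (S : ℝ → ℝ)
    (hS : ∀ x : ℝ, x ≠ 0 →
      S x = max (|x| - ρ ^ (2 - q) * |x| ^ (1 - q)) 0 * Real.sign x)
    (g : ℝ → ℝ)
    (hgeven : ∀ t : ℝ, g (-t) = g t)
    (hgcont : Continuous g)
    (hprox : ∀ x t : ℝ,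
      ρ * g (S x) + (1 / 2) * (S x - x) ^ 2 ≤ ρ * g t + (1 / 2) * (t - x) ^ 2) :
    Filter.Tendsto g (Filter.cocompact ℝ) Filter.atTop := by
  obtain ⟨hq0, hq1⟩ := hq
  set τ := qShrinkThreshold q ρ
  have hτ : 0 < τ := qShrinkThreshold_pos hρ
  have hS_eq : ∀ t, τ < t → S t = qShrink q ρ t := fun t ht => hS t (hτ.trans ht).ne'
  obtain ⟨m, hm⟩ := (isCompact_Icc (a := 0) (b := τ)).bddBelow_image hgcont.continuousOn
  have hgrowth : ∀ t, 0 ≤ t → m + 1 / (2 * ρ) * τ * (t - τ) ≤ g t := fun t ht =>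
    le_of_descent hτ (by positivity) (fun s hs => hm ⟨s, hs, rfl⟩)
      (fun s hs => hS_eq s hs ▸ qShrink_nonneg_of_pos (hτ.trans hs))
      (fun s hs => hS_eq s hs ▸ qShrink_le_sub_threshold hq0 hq1.le hρ hs.le)
      (fun s _ => descent_of_prox_at_self hρ (hprox s s)) ht
  refine Function.Even.tendsto_cocompact_atTop hgeven ?_ hgrowth
  exact tendsto_atTop_add_const_left _ m
    ((tendsto_atTop_add_const_right _ _ tendsto_id).const_mul_atTop (by positivity))

/-- coercivity of the `q`-shrinkage penalty for `q ∈ (0,1)`. If `g` is an even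
continuous function such that the `q`-shrinkage operation
`S(x) = max{|x| − ρ^{2−q}|x|^{1−q}, 0}·sign(x)` globally minimizes
`t ↦ ρ·g(t) + ½(t − x)²` for every `x`, then `g(t) → ∞ as |t| → ∞`. -/
theorem q_shrinkage_penalty_coercive
    (q ρ : ℝ) (hq : q ∈ Set.Ioo (0 : ℝ) 1) (hρ : 0 < ρ)
    (S : ℝ → ℝ) (hS0 : S 0 = 0)
    (hS : ∀ x : ℝ, x ≠ 0 →
      S x = max (|x| - ρ ^ (2 - q) * |x| ^ (1 - q)) 0 * Real.sign x)
    (g : ℝ → ℝ)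
    (hgeven : ∀ t : ℝ, g (-t) = g t)
    (hgcont : Continuous g)
    (hprox : ∀ x t : ℝ,
      ρ * g (S x) + (1 / 2) * (S x - x) ^ 2 ≤ ρ * g t + (1 / 2) * (t - x) ^ 2) :
    Filter.Tendsto g (Filter.cocompact ℝ) Filter.atTop :=
  q_shrinkage_penalty_coercive_general q ρ hq hρ S hS g hgeven hgcont hprox
end
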